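/- Let g be a symmetric invertible 4×4 real matrix, let W have Weyl symmetries with respect to g, let S be a symmetric 4×4 real matrix, and let K_{jabc} be defined as in the context. Then the trace of K over its second and third indices vanishes: Σ_{a,b} g^{ab} K_{jabc} = 0 for all j,c in Fin 4. -/

import Mathlib

/-!
Contract `g^{ab}` against `K_{jabc}` term by term. The first and third terms die, being a
symmetric tensor (`g^{ab}`, resp. `S^{bd}`) against an antisymmetric pair of `W`; the terms
carrying a metric factor collapse through `g^{ab} g_{bc} = δ^a_c` and `g^{ab} g_{ab} = 4`. What
is left is `S^{de} (W_{dcje} + W_{djce} - 2 W_{jdce} + 4 W_{cdje})`. By the antisymmetries of `W`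
the bracket is `3 (W_{cdje} + W_{djce})`, which the first Bianchi identity turns into
`3 W_{decj}`; this is antisymmetric in `d e`, so it too dies against `S^{de}`.
-/

open Finset

/-- The tensor `K_{jabc}` built from the Schouten-type tensor `S` and the Weyl-type
tensor `W`:
`K_{jabc} = S_c{}^{d} W_{abjd} + S_b{}^{d} W_{acjd} + S_a{}^{d} W_{bdcj} + S_a{}^{d} W_{bjcd}
  − g_{bc} S^{de} W_{adje} − 2 g_{aj} S^{de} W_{bdce} + g_{ac} S^{de} W_{bdje}
  + g_{ab} S^{de} W_{cdje}`. -/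
noncomputable def Ktensor (g ginv S : Fin 4 → Fin 4 → ℝ)
    (W : Fin 4 → Fin 4 → Fin 4 → Fin 4 → ℝ) (j a b c : Fin 4) : ℝ :=
  (∑ d, (∑ e, S c e * ginv e d) * W a b j d)
    + (∑ d, (∑ e, S b e * ginv e d) * W a c j d)
    + (∑ d, (∑ e, S a e * ginv e d) * W b d c j)
    + (∑ d, (∑ e, S a e * ginv e d) * W b j c d)
    - g b c * (∑ d, ∑ e, (∑ p, ∑ q, ginv d p * ginv e q * S p q) * W a d j e)
    - 2 * g a j * (∑ d, ∑ e, (∑ p, ∑ q, ginv d p * ginv e q * S p q) * W b d c e)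
    + g a c * (∑ d, ∑ e, (∑ p, ∑ q, ginv d p * ginv e q * S p q) * W b d j e)
    + g a b * (∑ d, ∑ e, (∑ p, ∑ q, ginv d p * ginv e q * S p q) * W c d j e)

section Contraction

variable {ι : Type*} [Fintype ι]

noncomputable def raiseBoth (ginv S : ι → ι → ℝ) (d e : ι) : ℝ :=
  ∑ p, ∑ q, ginv d p * ginv e q * S p q

theorem symm_of_sum_mul_eq_ite [DecidableEq ι] {g ginv : ι → ι → ℝ}
    (hg : ∀ a b, g a b = g b a)
    (hginv : ∀ a b, ∑ c, ginv a c * g c b = if a = b then 1 else 0) (a b : ι) :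
    ginv a b = ginv b a := by
  have hmul : Matrix.of ginv * Matrix.of g = 1 := by
    ext a b
    simpa [Matrix.mul_apply, Matrix.one_apply] using hginv a b
  have hsymm : (Matrix.of g)⁻¹.IsSymm := (Matrix.IsSymm.ext fun a b => hg b a).inv
  simpa [Matrix.inv_eq_left_inv hmul] using hsymm.apply b a

theorem raiseBoth_symm {ginv S : ι → ι → ℝ} (hS : ∀ a b, S a b = S b a) (d e : ι) :
    raiseBoth ginv S d e = raiseBoth ginv S e d := by
  unfold raiseBoth
  rw [sum_comm]
  exact sum_congr rfl fun p _ => sum_congr rfl fun q _ => by rw [hS q p]; ring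

theorem sum_sum_mul_eq_zero_of_symm_of_antisymm {P Q : ι → ι → ℝ}
    (hP : ∀ a b, P a b = P b a) (hQ : ∀ a b, Q a b = -Q b a) :
    ∑ a, ∑ b, P a b * Q a b = 0 := by
  have h : ∑ a, ∑ b, P a b * Q a b = ∑ a, ∑ b, -(P a b * Q a b) := by
    rw [sum_comm]
    exact sum_congr rfl fun a _ => sum_congr rfl fun b _ => by rw [hP b a, hQ b a]; ring
  simp only [sum_neg_distrib] at h
  linarith

variable {g ginv : ι → ι → ℝ}

theorem sum_sum_mul_sum_raise_right (hsymm : ∀ a b, ginv a b = ginv b a) (S F : ι → ι → ℝ) :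
    ∑ a, ∑ b, ginv a b * ∑ d, (∑ e, S b e * ginv e d) * F a d
      = ∑ a, ∑ d, raiseBoth ginv S a d * F a d := by
  refine sum_congr rfl fun a _ => ?_
  simp only [raiseBoth, mul_sum, sum_mul]
  rw [sum_comm]
  refine sum_congr rfl fun d _ => sum_congr rfl fun b _ => sum_congr rfl fun e _ => ?_
  rw [hsymm e d]
  ring

theorem sum_sum_mul_sum_raise_left (hsymm : ∀ a b, ginv a b = ginv b a) (S F : ι → ι → ℝ) :
    ∑ a, ∑ b, ginv a b * ∑ d, (∑ e, S a e * ginv e d) * F b d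
      = ∑ b, ∑ d, raiseBoth ginv S b d * F b d := by
  rw [sum_comm, ← sum_sum_mul_sum_raise_right hsymm S F]
  exact sum_congr rfl fun b _ => sum_congr rfl fun a _ => by rw [hsymm a b]

variable [DecidableEq ι]

theorem sum_sum_inv_mul_mul_right
    (hginv : ∀ a b, ∑ c, ginv a c * g c b = if a = b then 1 else 0) (c : ι) (X : ι → ℝ) :
    ∑ a, ∑ b, ginv a b * (g b c * X a) = X c := by
  simp_rw [← mul_assoc, ← sum_mul, hginv]
  simp

theorem sum_sum_inv_mul_mul_left (hsymm : ∀ a b, ginv a b = ginv b a)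
    (hginv : ∀ a b, ∑ c, ginv a c * g c b = if a = b then 1 else 0) (c : ι) (X : ι → ℝ) :
    ∑ a, ∑ b, ginv a b * (g a c * X b) = X c := by
  rw [sum_comm, ← sum_sum_inv_mul_mul_right hginv c X]
  exact sum_congr rfl fun b _ => sum_congr rfl fun a _ => by rw [hsymm a b]

theorem sum_sum_inv_mul_mul_self (hg : ∀ a b, g a b = g b a)
    (hginv : ∀ a b, ∑ c, ginv a c * g c b = if a = b then 1 else 0) (x : ℝ) :
    ∑ a, ∑ b, ginv a b * (g a b * x) = Fintype.card ι * x := by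
  calc _ = ∑ a, (∑ b, ginv a b * g b a) * x :=
        sum_congr rfl fun a _ => by
          rw [sum_mul]
          exact sum_congr rfl fun b _ => by rw [hg a b]; ring
    _ = Fintype.card ι * x := by simp [hginv]

end Contraction

theorem sum_inv_mul_Ktensor {g ginv S : Fin 4 → Fin 4 → ℝ} {W : Fin 4 → Fin 4 → Fin 4 → Fin 4 → ℝ}
    (hg : ∀ a b, g a b = g b a)
    (hginv : ∀ a b, ∑ c, ginv a c * g c b = if a = b then (1 : ℝ) else 0)
    (hW1 : ∀ a b c d, W a b c d = - W b a c d) (hS : ∀ a b, S a b = S b a) (j c : Fin 4) :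
    ∑ a, ∑ b, ginv a b * Ktensor g ginv S W j a b c
      = ∑ d, ∑ e, raiseBoth ginv S d e *
          (W d c j e + W d j c e - 2 * W j d c e + 4 * W c d j e) := by
  have hsymm := symm_of_sum_mul_eq_ite hg hginv
  have first_vanishes : ∑ a, ∑ b, ginv a b * ∑ d, (∑ e, S c e * ginv e d) * W a b j d = 0 :=
    sum_sum_mul_eq_zero_of_symm_of_antisymm hsymm fun a b => by
      rw [← sum_neg_distrib]
      exact sum_congr rfl fun d _ => by rw [hW1 a b j d]; ring
  have third_vanishes : ∑ b, ∑ d, raiseBoth ginv S b d * W b d c j = 0 :=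
    sum_sum_mul_eq_zero_of_symm_of_antisymm (raiseBoth_symm hS) fun b d => hW1 b d c j
  simp only [Ktensor, mul_add, mul_sub, sum_add_distrib, sum_sub_distrib, ← raiseBoth.eq_1]
  simp only [mul_assoc (2 : ℝ), mul_left_comm _ (2 : ℝ), mul_left_comm _ (4 : ℝ), ← mul_sum]
  rw [first_vanishes, sum_sum_mul_sum_raise_right hsymm, sum_sum_mul_sum_raise_left hsymm,
    sum_sum_mul_sum_raise_left hsymm, third_vanishes, sum_sum_inv_mul_mul_right hginv,
    sum_sum_inv_mul_mul_left hsymm hginv, sum_sum_inv_mul_mul_left hsymm hginv,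
    sum_sum_inv_mul_mul_self hg hginv, Fintype.card_fin]
  ring

theorem Ktensor_traceless_middle_two_general
    (g ginv : Fin 4 → Fin 4 → ℝ)
    (hg : ∀ a b, g a b = g b a)
    (hginv : ∀ a b, ∑ c, ginv a c * g c b = if a = b then (1 : ℝ) else 0)
    (W : Fin 4 → Fin 4 → Fin 4 → Fin 4 → ℝ)
    (hW1 : ∀ a b c d, W a b c d = - W b a c d)
    (hW2 : ∀ a b c d, W a b c d = - W a b d c)
    (hW4 : ∀ a b c d, W a b c d + W a c d b + W a d b c = 0)
    (S : Fin 4 → Fin 4 → ℝ)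
    (hS : ∀ a b, S a b = S b a)
    (j c : Fin 4) :
    ∑ a, ∑ b, ginv a b * Ktensor g ginv S W j a b c = 0 := by
  rw [sum_inv_mul_Ktensor hg hginv hW1 hS]
  calc _ = ∑ d, ∑ e, raiseBoth ginv S d e * (3 * W d e c j) := by
        refine sum_congr rfl fun d _ => sum_congr rfl fun e _ => ?_
        linear_combination raiseBoth ginv S d e *
          (4 * hW1 d c j e - 2 * hW1 j d c e - 3 * hW4 d c j e + 3 * hW2 d j e c)
    _ = 0 := sum_sum_mul_eq_zero_of_symm_of_antisymm (raiseBoth_symm hS) fun d e => by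
        rw [hW1 d e c j]
        ring

/-- The trace of `K` over its second and third indices vanishes: `g^{ab} K_{jabc} = 0`. -/
theorem Ktensor_traceless_middle_two
    (g ginv : Fin 4 → Fin 4 → ℝ)
    (hg : ∀ a b, g a b = g b a)
    (hginv : ∀ a b, ∑ c, ginv a c * g c b = if a = b then (1 : ℝ) else 0)
    (W : Fin 4 → Fin 4 → Fin 4 → Fin 4 → ℝ)
    (hW1 : ∀ a b c d, W a b c d = - W b a c d)
    (hW2 : ∀ a b c d, W a b c d = - W a b d c)
    (hW3 : ∀ a b c d, W a b c d = W c d a b)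
    (hW4 : ∀ a b c d, W a b c d + W a c d b + W a d b c = 0)
    (hWtr : ∀ b d, ∑ a, ∑ c, ginv a c * W a b c d = 0)
    (S : Fin 4 → Fin 4 → ℝ)
    (hS : ∀ a b, S a b = S b a)
    (j c : Fin 4) :
    ∑ a, ∑ b, ginv a b * Ktensor g ginv S W j a b c = 0 :=
  Ktensor_traceless_middle_two_general g ginv hg hginv W hW1 hW2 hW4 S hS j c
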